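/- Let r ≥ k ≥ 5 be integers, let H be an n-vertex connected BP_k-free r-uniform hypergraph, let t be the maximum length of a Berge path in H, and suppose H contains a Berge cycle of length t. Then the number of hyperedges of H satisfies e(H) ≤ max{t+1, t + (n−t)/(r−⌊t/2⌋)}, where the second term is a rational number. -/

import Mathlib

/-!
Since `t < k ≤ r`, every edge has more than `t` vertices. Fix a Berge cycle `C` of length `t` on
the vertex set `W` and an edge `g` not on `C`. If `g` contained a cycle vertex `v j`, start at a
vertex of `g` outside `W`, step to `v j` through `g`, go round `C` to `v (j - 1)` and leave through
`f (j - 1)` to one of its vertices outside `W`: a Berge path of length `t + 1`, unless the two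
outside vertices are forced to coincide, which makes both edges equal to `W ∪ {c}`. If `g` met a
cycle edge `f j`, necessarily outside `W`, start at another vertex of `g`, enter `f j` through `g`
and go round `C`: again a path of length `t + 1`. Hence the union of the cycle edges is closed
under edges, connectivity makes every edge a cycle edge, and `e(H) ≤ t`.
-/

namespace Berge

def IsBergePath {n : ℕ} (E : Finset (Finset (Fin n))) (k : ℕ)
    (v : Fin (k + 1) → Fin n) (f : Fin k → Finset (Fin n)) : Prop :=
  Function.Injective v ∧ Function.Injective f ∧ (∀ i, f i ∈ E) ∧
    ∀ i : Fin k, v i.castSucc ∈ f i ∧ v i.succ ∈ f i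

def HasBergePath {n : ℕ} (E : Finset (Finset (Fin n))) (k : ℕ) : Prop :=
  ∃ v f, IsBergePath E k v f

def BPFree {n : ℕ} (E : Finset (Finset (Fin n))) (k : ℕ) : Prop :=
  ¬ HasBergePath E k

def Connected {n : ℕ} (E : Finset (Finset (Fin n))) : Prop :=
  ∀ x y : Fin n, ∃ (k : ℕ) (v : Fin (k + 1) → Fin n) (f : Fin k → Finset (Fin n)),
    IsBergePath E k v f ∧ (∃ i, v i = x) ∧ (∃ i, v i = y)

def Uniform {n : ℕ} (E : Finset (Finset (Fin n))) (r : ℕ) : Prop :=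
  ∀ e ∈ E, e.card = r

noncomputable def exConn (n r k : ℕ) : ℕ :=
  sSup {m | ∃ E : Finset (Finset (Fin n)),
    Uniform E r ∧ Connected E ∧ BPFree E k ∧ E.card = m}

def IsBergeCycle {n : ℕ} (E : Finset (Finset (Fin n))) (k : ℕ)
    (v : Fin k → Fin n) (f : Fin k → Finset (Fin n)) : Prop :=
  Function.Injective v ∧ Function.Injective f ∧ (∀ i, f i ∈ E) ∧
    ∀ i : Fin k, v i ∈ f i ∧ v ⟨(i.val + 1) % k, Nat.mod_lt _ i.pos⟩ ∈ f i

theorem _root_.Finset.eq_of_forall_mem_sdiff_eq {α : Type*} [DecidableEq α] {W s t : Finset α}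
    (hs : W.card < s.card) (ht : W.card < t.card) (h : ∀ x ∈ s \ W, ∀ y ∈ t \ W, x = y) :
    s = t := by
  obtain ⟨c, hc⟩ : (s \ W).Nonempty := by
    rw [← Finset.card_pos]; have := Finset.le_card_sdiff W s; omega
  have hsub : ∀ u, W.card < u.card → (∀ x ∈ u \ W, x = c) → u = insert c W := by
    intro u hu hcu
    refine Finset.eq_of_subset_of_card_le (fun x hx => ?_) ?_
    · by_cases hxW : x ∈ W
      · exact Finset.mem_insert_of_mem hxW
      · simp [hcu x (Finset.mem_sdiff.2 ⟨hx, hxW⟩)]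
    · rw [Finset.card_insert_of_notMem (Finset.mem_sdiff.1 hc).2]; omega
  obtain ⟨d, hd⟩ : (t \ W).Nonempty := by
    rw [← Finset.card_pos]; have := Finset.le_card_sdiff W t; omega
  rw [hsub s hs fun x hx => (h x hx d hd).trans (h c hc d hd).symm,
    hsub t ht fun y hy => (h c hc y hy).symm]

variable {n : ℕ} {E : Finset (Finset (Fin n))}

theorem HasBergePath.mono {s k : ℕ} (h : HasBergePath E s) (hks : k ≤ s) :
    HasBergePath E k := by
  obtain ⟨v, f, hv, hf, hfE, hstep⟩ := h
  exact ⟨v ∘ Fin.castLE (by omega), f ∘ Fin.castLE hks,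
    hv.comp (Fin.castLE_injective _), hf.comp (Fin.castLE_injective _),
    fun i => hfE _, fun i => hstep (Fin.castLE hks i)⟩

namespace IsBergePath

variable {m : ℕ} {v : Fin (m + 1) → Fin n} {f : Fin m → Finset (Fin n)}

theorem cons (hP : IsBergePath E m v f) {x : Fin n} {g : Finset (Fin n)} (hg : g ∈ E)
    (hx : x ∉ Set.range v) (hgf : g ∉ Set.range f) (hxg : x ∈ g) (hv0 : v 0 ∈ g) :
    IsBergePath E (m + 1) (Fin.cons x v) (Fin.cons g f) := by
  obtain ⟨hv, hf, hfE, hstep⟩ := hP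
  refine ⟨Fin.cons_injective_of_injective hx hv, Fin.cons_injective_of_injective hgf hf,
    Fin.cases hg hfE, Fin.cases ⟨hxg, hv0⟩ fun i => ?_⟩
  simpa only [Fin.cons_succ, ← Fin.succ_castSucc] using hstep i

theorem snoc (hP : IsBergePath E m v f) {y : Fin n} {g : Finset (Fin n)} (hg : g ∈ E)
    (hy : y ∉ Set.range v) (hgf : g ∉ Set.range f) (hyg : y ∈ g) (hvm : v (Fin.last m) ∈ g) :
    IsBergePath E (m + 1) (Fin.snoc v y) (Fin.snoc f g) := by
  obtain ⟨hv, hf, hfE, hstep⟩ := hP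
  refine ⟨Fin.snoc_injective_of_injective hv hy, Fin.snoc_injective_of_injective hf hgf,
    Fin.lastCases (by simpa using hg) (by simpa using hfE), Fin.lastCases ?_ fun i => ?_⟩
  · simpa only [Fin.snoc_last, Fin.succ_last, Fin.snoc_castSucc] using ⟨hvm, hyg⟩
  · simpa only [Fin.snoc_castSucc, Fin.succ_castSucc] using hstep i

theorem mem_iff_mem_zero (hP : IsBergePath E m v f) {S : Set (Fin n)}
    (hS : ∀ e ∈ E, ∀ a ∈ e, ∀ b ∈ e, a ∈ S → b ∈ S) (i : Fin (m + 1)) :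
    v i ∈ S ↔ v 0 ∈ S := by
  induction i using Fin.induction with
  | zero => rfl
  | succ i ih =>
    obtain ⟨h1, h2⟩ := hP.2.2.2 i
    rw [← ih]
    exact ⟨hS _ (hP.2.2.1 i) _ h2 _ h1, hS _ (hP.2.2.1 i) _ h1 _ h2⟩

end IsBergePath

theorem Connected.mem_of_closed (hc : Connected E) {S : Set (Fin n)}
    (hS : ∀ e ∈ E, ∀ a ∈ e, ∀ b ∈ e, a ∈ S → b ∈ S) {x : Fin n} (hx : x ∈ S) (y : Fin n) :
    y ∈ S := by
  obtain ⟨m, v, f, hP, ⟨a, rfl⟩, ⟨b, rfl⟩⟩ := hc x y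
  exact (hP.mem_iff_mem_zero hS b).2 ((hP.mem_iff_mem_zero hS a).1 hx)

theorem hasBergePath_one_of_mem {g : Finset (Fin n)} (hg : g ∈ E) {a b : Fin n}
    (ha : a ∈ g) (hb : b ∈ g) (hab : a ≠ b) : HasBergePath E 1 :=
  have hP : IsBergePath E 0 (fun _ => b) Fin.elim0 :=
    ⟨fun _ _ _ => Subsingleton.elim (α := Fin 1) _ _, fun i => i.elim0, fun i => i.elim0, fun i => i.elim0⟩
  ⟨_, _, hP.cons hg (by simpa using hab) (by simp) ha hb⟩

namespace IsBergeCycle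

variable {m : ℕ} {v : Fin (m + 1) → Fin n} {f : Fin (m + 1) → Finset (Fin n)}

theorem mem_add_one (hC : IsBergeCycle E (m + 1) v f) (i : Fin (m + 1)) : v (i + 1) ∈ f i := by
  convert (hC.2.2.2 i).2 using 2
  ext
  simp [Fin.val_add]

theorem isBergePath_rotate (hC : IsBergeCycle E (m + 1) v f) (j : Fin (m + 1)) :
    IsBergePath E m (fun i => v (j + i)) (fun i => f (j + i.castSucc)) := by
  obtain ⟨hv, hf, hfE, hstep⟩ := hC
  refine ⟨hv.comp (add_right_injective j), (hf.comp (add_right_injective j)).comp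
    (Fin.castSucc_injective _), fun i => hfE _, fun i => ⟨(hstep _).1, ?_⟩⟩
  show v (j + i.succ) ∈ f (j + i.castSucc)
  rw [← Fin.coeSucc_eq_succ, ← add_assoc]
  exact mem_add_one ⟨hv, hf, hfE, hstep⟩ _

variable {g : Finset (Fin n)}

theorem hasBergePath_of_mem_vertex (hC : IsBergeCycle E (m + 1) v f) (hg : g ∈ E)
    (hgf : g ∉ Set.range f) {j : Fin (m + 1)} (hvj : v j ∈ g) {x y : Fin n} (hxg : x ∈ g)
    (hx : x ∉ Set.range v) (hyf : y ∈ f (j + Fin.last m)) (hy : y ∉ Set.range v) (hxy : x ≠ y) :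
    HasBergePath E (m + 2) := by
  have hP := (hC.isBergePath_rotate j).cons hg (by rintro ⟨i, rfl⟩; exact hx ⟨_, rfl⟩)
    (by rintro ⟨i, rfl⟩; exact hgf ⟨_, rfl⟩) hxg (by simpa using hvj)
  refine ⟨_, _, hP.snoc (hC.2.2.1 _) ?_ ?_ hyf ?_⟩
  · rw [Fin.range_cons]
    rintro (rfl | ⟨i, rfl⟩)
    exacts [hxy rfl, hy ⟨_, rfl⟩]
  · rw [Fin.range_cons]
    rintro (h | ⟨i, hi⟩)
    · exact hgf ⟨_, h⟩
    · exact Fin.castSucc_ne_last i (add_left_cancel (hC.2.1 hi))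
  · rw [← Fin.succ_last, Fin.cons_succ]
    exact (hC.2.2.2 _).1

theorem hasBergePath_of_mem_edge (hC : IsBergeCycle E (m + 1) v f) (hg : g ∈ E)
    (hgf : g ∉ Set.range f) {j : Fin (m + 1)} {y z : Fin n} (hzg : z ∈ g) (hzf : z ∈ f j)
    (hz : z ∉ Set.range v) (hyg : y ∈ g) (hy : y ∉ Set.range v) (hyz : y ≠ z) :
    HasBergePath E (m + 2) := by
  have hP := (hC.isBergePath_rotate (j + 1)).cons (hC.2.2.1 j)
    (by rintro ⟨i, rfl⟩; exact hz ⟨_, rfl⟩) ?_ hzf (by simpa using hC.mem_add_one j)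
  · refine ⟨_, _, hP.cons hg ?_ ?_ hyg hzg⟩
    · rw [Fin.range_cons]
      rintro (rfl | ⟨i, rfl⟩)
      exacts [hyz rfl, hy ⟨_, rfl⟩]
    · rw [Fin.range_cons]
      rintro (h | ⟨i, hi⟩)
      exacts [hgf ⟨_, h.symm⟩, hgf ⟨_, hi⟩]
  · rintro ⟨i, hi⟩
    refine Fin.castSucc_ne_last i (add_left_cancel ((hC.2.1 hi).trans ?_))
    rw [add_assoc, add_comm 1, Fin.last_add_one, add_zero]

theorem notMem_of_notMem_range (hlong : ¬ HasBergePath E (m + 2))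
    (hcard : ∀ e ∈ E, m + 1 < e.card) (hC : IsBergeCycle E (m + 1) v f) (hg : g ∈ E)
    (hgf : g ∉ Set.range f) (j : Fin (m + 1)) : v j ∉ g := by
  intro hvj
  have hW : (Finset.univ.image v).card < m + 2 :=
    Finset.card_image_le.trans_lt (by simp)
  refine hgf ⟨j + Fin.last m, (Finset.eq_of_forall_mem_sdiff_eq (W := Finset.univ.image v)
    (by have := hcard g hg; omega) (by have := hcard _ (hC.2.2.1 (j + Fin.last m)); omega)
    fun x hx y hy => ?_).symm⟩
  simp only [Finset.mem_sdiff, Finset.mem_image, Finset.mem_univ, true_and] at hx hy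
  by_contra hxy
  exact hlong (hC.hasBergePath_of_mem_vertex hg hgf hvj hx.1 hx.2 hy.1 hy.2 hxy)

theorem disjoint_of_notMem_range (hlong : ¬ HasBergePath E (m + 2))
    (hcard : ∀ e ∈ E, m + 1 < e.card) (hC : IsBergeCycle E (m + 1) v f) (hg : g ∈ E)
    (hgf : g ∉ Set.range f) (i : Fin (m + 1)) : Disjoint g (f i) := by
  have hgv : ∀ {x}, x ∈ g → x ∉ Set.range v := by
    rintro x hx ⟨j, rfl⟩
    exact hC.notMem_of_notMem_range hlong hcard hg hgf j hx
  refine Finset.disjoint_left.2 fun z hzg hzf => ?_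
  obtain ⟨y, hyg, hyz⟩ := Finset.exists_mem_ne (s := g) (by have := hcard g hg; omega) z
  exact hlong (hC.hasBergePath_of_mem_edge hg hgf hzg hzf (hgv hzg) hyg (hgv hyg) hyz)

theorem mem_range (hlong : ¬ HasBergePath E (m + 2)) (hcard : ∀ e ∈ E, m + 1 < e.card)
    (hC : IsBergeCycle E (m + 1) v f) (hc : Connected E) (hg : g ∈ E) : g ∈ Set.range f := by
  by_contra hgf
  have hS : ∀ e ∈ E, ∀ a ∈ e, ∀ b ∈ e, (∃ i, a ∈ f i) → ∃ i, b ∈ f i := by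
    rintro e he a ha b hb ⟨i, hai⟩
    by_cases hef : e ∈ Set.range f
    · obtain ⟨i', rfl⟩ := hef
      exact ⟨i', hb⟩
    · exact absurd hai (Finset.disjoint_left.1
        (hC.disjoint_of_notMem_range hlong hcard he hef i) ha)
  obtain ⟨x, hx⟩ := (Finset.card_pos (s := g)).1 (by have := hcard g hg; omega)
  obtain ⟨i, hxi⟩ := hc.mem_of_closed (S := {z | ∃ i, z ∈ f i}) hS ⟨0, (hC.2.2.2 0).1⟩ x
  exact Finset.disjoint_left.1 (hC.disjoint_of_notMem_range hlong hcard hg hgf i) hx hxi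

theorem card_le (hlong : ¬ HasBergePath E (m + 2)) (hcard : ∀ e ∈ E, m + 1 < e.card)
    (hC : IsBergeCycle E (m + 1) v f) (hc : Connected E) : E.card ≤ m + 1 := by
  calc E.card ≤ (Finset.univ.image f).card := Finset.card_le_card fun g hg => by
        obtain ⟨i, rfl⟩ := hC.mem_range hlong hcard hc hg
        exact Finset.mem_image_of_mem f (Finset.mem_univ i)
    _ ≤ m + 1 := Finset.card_image_le.trans (by simp)

end IsBergeCycle

theorem eq_empty_of_not_hasBergePath_one (h : ¬ HasBergePath E 1)
    (hcard : ∀ e ∈ E, 1 < e.card) : E = ∅ :=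
  Finset.eq_empty_of_forall_notMem fun g hg =>
    let ⟨_, ha, _, hb, hab⟩ := Finset.one_lt_card.1 (hcard g hg)
    h (hasBergePath_one_of_mem hg ha hb hab)

theorem stmt18 (n r k t : ℕ) (hk : 5 ≤ k) (hrk : k ≤ r)
    (E : Finset (Finset (Fin n))) (hu : Uniform E r) (hc : Connected E)
    (hf : BPFree E k)
    (ht : HasBergePath E t) (hmax : ∀ s : ℕ, HasBergePath E s → s ≤ t)
    (hcyc : ∃ (v : Fin t → Fin n) (f : Fin t → Finset (Fin n)), IsBergeCycle E t v f) :
    (E.card : ℚ) ≤ max ((t : ℚ) + 1)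
      ((t : ℚ) + ((n : ℚ) - (t : ℚ)) / ((r : ℚ) - ((t / 2 : ℕ) : ℚ))) := by
  have htk : t < k := lt_of_not_ge fun h => hf (ht.mono h)
  have hcard : ∀ e ∈ E, t < e.card := fun e he => by rw [hu e he]; omega
  have hlong : ¬ HasBergePath E (t + 1) := fun h => by have := hmax _ h; omega
  have hE : E.card ≤ t + 1 := by
    obtain ⟨v, f, hC⟩ := hcyc
    cases t with
    | zero =>
      simp [eq_empty_of_not_hasBergePath_one hlong fun e he => by rw [hu e he]; omega]
    | succ m => exact (hC.card_le hlong hcard hc).trans m.succ.le_succ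
  exact le_max_of_le_left (by exact_mod_cast hE)

end Berge
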